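/- arXiv:1710.02426 — 8 statements merged into one kernel-verified Lean document; each statement's English description precedes it below -/
import Mathlib

section
/- Let f_λ(x) = G(λ, x) be a one-parameter family of maps, smooth (at least C³) in both variables. Suppose that (1) f_λ(x₀) = x₀ for all λ in an open interval around λ₀; (2) ∂f_{λ₀}/∂x(x₀) = −1; and (3) ∂/∂λ [ ∂(f_λ ∘ f_λ)/∂x (x₀) ] evaluated at λ = λ₀ is nonzero. Then there exist an open interval I around x₀ and a C¹ function p : I → ℝ with p(x₀) = λ₀ such that f_{p(x)}(f_{p(x)}(x)) = x for every x ∈ I, while f_{p(x)}(x) ≠ x for every x ∈ I with x ≠ x₀; that is, each such x ≠ x₀ is a genuine period-2 point of f_{p(x)}. -/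
/-! Write `g(λ, x) = f_λ(f_λ(x))`. Since `x₀` is fixed for every `λ`, Hadamard's lemma factors
`g(λ, x) - x₀ = (x - x₀) Q(λ, x)` with `Q` of class `C¹` and `Q(λ, x₀) = ∂ₓg(λ, x₀)`.
Hypothesis (2) gives `Q(λ₀, x₀) = 1` and (3) says `∂_λ Q(λ₀, x₀) ≠ 0`, so the implicit function
theorem solves `Q(p(x), x) = 1`, i.e. `g(p(x), x) = x`. Near `(λ₀, x₀)` we have `∂ₓf_λ < 1`, so
`x ↦ f_λ(x) - x` is strictly decreasing and `x₀` is the only nearby fixed point of `f_{p(x)}`. -/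

open Set Filter Metric Topology

theorem ContDiff.deriv_snd {P E : Type*} [NormedAddCommGroup P] [NormedSpace ℝ P]
    [NormedAddCommGroup E] [NormedSpace ℝ E] {h : P × ℝ → E} {m n : WithTop ℕ∞}
    (hh : ContDiff ℝ n h) (hmn : m + 1 ≤ n) :
    ContDiff ℝ m (fun q : P × ℝ => deriv (fun y => h (q.1, y)) q.2) := by
  simpa only [fderiv_apply_one_eq_deriv] using
    ContDiff.fderiv_apply (f := fun (q : P × ℝ) (y : ℝ) => h (q.1, y)) (g := Prod.snd)
      (k := fun _ => (1 : ℝ)) (hh.comp (by fun_prop)) contDiff_snd contDiff_const hmn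

theorem sub_eq_smul_integral_deriv {E : Type*} [NormedAddCommGroup E] [NormedSpace ℝ E]
    [CompleteSpace E] {f : ℝ → E} (hf : ContDiff ℝ 1 f) (a x : ℝ) :
    f x - f a = (x - a) • ∫ t in (0 : ℝ)..1, deriv f (a + t * (x - a)) := by
  have hline : ∀ t : ℝ, HasDerivAt (fun t => f (a + t * (x - a)))
      ((x - a) • deriv f (a + t * (x - a))) t := by
    intro t
    have := (hf.differentiable one_ne_zero _).hasDerivAt.scomp t
      ((hasDerivAt_mul_const (x - a)).const_add a)
    simpa only [Function.comp_def] using this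
  have hcont : Continuous fun t : ℝ => (x - a) • deriv f (a + t * (x - a)) :=
    continuous_const.smul ((hf.continuous_deriv le_rfl).comp (by fun_prop))
  rw [← intervalIntegral.integral_smul,
    intervalIntegral.integral_eq_sub_of_hasDerivAt (fun t _ => hline t)
      (hcont.intervalIntegrable 0 1)]
  simp

theorem contDiff_one_intervalIntegral {H E : Type*} [NormedAddCommGroup H] [NormedSpace ℝ H]
    [ProperSpace H] [NormedAddCommGroup E] [NormedSpace ℝ E] {k : H × ℝ → E}
    (hk : ContDiff ℝ 1 k) (a b : ℝ) :
    ContDiff ℝ 1 fun z => ∫ t in a..b, k (z, t) := by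
  set k' : H → ℝ → H →L[ℝ] E := fun z t => fderiv ℝ (fun w => k (w, t)) z
  have hk'_cont : Continuous fun p : H × ℝ => k' p.1 p.2 :=
    (ContDiff.fderiv (f := fun (p : H × ℝ) (w : H) => k (w, p.2)) (g := Prod.fst)
      (m := 1) (n := 0) (hk.comp (by fun_prop)) contDiff_fst le_rfl).continuous
  have hderiv : ∀ z₀ : H, HasFDerivAt (fun z => ∫ t in a..b, k (z, t))
      (∫ t in a..b, k' z₀ t) z₀ := by
    intro z₀
    obtain ⟨M, hM⟩ := ((isCompact_closedBall z₀ 1).prod isCompact_uIcc).bddAbove_image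
      hk'_cont.norm.continuousOn
    apply intervalIntegral.hasFDerivAt_integral_of_dominated_of_fderiv_le
      (ball_mem_nhds z₀ one_pos) (bound := fun _ => M)
    · exact .of_forall fun z =>
        (hk.continuous.comp (continuous_const.prodMk continuous_id)).aestronglyMeasurable
    · exact (hk.continuous.comp (continuous_const.prodMk continuous_id)).intervalIntegrable _ _
    · exact (hk'_cont.comp (continuous_const.prodMk continuous_id)).aestronglyMeasurable
    · refine .of_forall fun t ht z hz => hM ⟨(z, t), ⟨ball_subset_closedBall hz, ?_⟩, rfl⟩
      exact uIoc_subset_uIcc ht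
    · exact intervalIntegrable_const
    · exact .of_forall fun t _ z _ =>
        ((hk.comp (by fun_prop : ContDiff ℝ 1 fun w : H => (w, t))).differentiable
          one_ne_zero z).hasFDerivAt
  rw [contDiff_one_iff_fderiv]
  refine ⟨fun z => (hderiv z).differentiableAt, ?_⟩
  rw [funext fun z => (hderiv z).fderiv]
  exact intervalIntegral.continuous_parametric_intervalIntegral_of_continuous' hk'_cont a b

section HadamardQuotient

variable {P : Type*}

/-- The difference quotient `(h (l, x) - h (l, x₀)) / (x - x₀)` in the integral form of
Hadamard's lemma, which stays smooth across `x = x₀`. -/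
noncomputable def hadamardQuotient (h : P × ℝ → ℝ) (x₀ : ℝ) (q : P × ℝ) : ℝ :=
  ∫ t in (0 : ℝ)..1, deriv (fun y => h (q.1, y)) (x₀ + t * (q.2 - x₀))

theorem hadamardQuotient_self (h : P × ℝ → ℝ) (x₀ : ℝ) (l : P) :
    hadamardQuotient h x₀ (l, x₀) = deriv (fun y => h (l, y)) x₀ := by
  simp [hadamardQuotient]

theorem hadamardQuotient_mul [NormedAddCommGroup P] [NormedSpace ℝ P] {h : P × ℝ → ℝ}
    (hh : ContDiff ℝ 1 h) (x₀ : ℝ) (q : P × ℝ) :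
    (q.2 - x₀) * hadamardQuotient h x₀ q = h q - h (q.1, x₀) :=
  (sub_eq_smul_integral_deriv (hh.comp (contDiff_const.prodMk contDiff_id)) x₀ q.2).symm

theorem contDiff_hadamardQuotient [NormedAddCommGroup P] [NormedSpace ℝ P] [ProperSpace P]
    {h : P × ℝ → ℝ} (hh : ContDiff ℝ 2 h) (x₀ : ℝ) : ContDiff ℝ 1 (hadamardQuotient h x₀) :=
  contDiff_one_intervalIntegral ((hh.deriv_snd le_rfl).comp
    (f := fun p : (P × ℝ) × ℝ => (p.1.1, x₀ + p.2 * (p.1.2 - x₀))) (by fun_prop)) 0 1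

end HadamardQuotient

theorem ContinuousLinearMap.isInvertible_of_apply_one_ne_zero {𝕜 : Type*}
    [NontriviallyNormedField 𝕜] {L : 𝕜 →L[𝕜] 𝕜} (h : L 1 ≠ 0) : L.IsInvertible :=
  ⟨ContinuousLinearEquiv.unitsEquivAut 𝕜 (Units.mk0 _ h), ext_ring (by simp)⟩

theorem exists_contDiffAt_implicit_fst {F : ℝ × ℝ → ℝ} {lam₀ x₀ : ℝ}
    (hF : ContDiffAt ℝ 1 F (lam₀, x₀)) (hderiv : deriv (fun lam => F (lam, x₀)) lam₀ ≠ 0) :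
    ∃ p : ℝ → ℝ, ContDiffAt ℝ 1 p x₀ ∧ p x₀ = lam₀ ∧
      ∀ᶠ x in 𝓝 x₀, F (p x, x) = F (lam₀, x₀) := by
  have hswap : ContDiffAt ℝ 1 (fun v : ℝ × ℝ => F v.swap) (x₀, lam₀) :=
    hF.comp (x₀, lam₀) (contDiff_snd.prodMk contDiff_fst).contDiffAt
  have hline : HasDerivAt (fun lam => F (lam, x₀))
      ((fderiv ℝ (fun v : ℝ × ℝ => F v.swap) (x₀, lam₀) ∘L .inr ℝ ℝ ℝ) 1) lam₀ :=
    (hswap.differentiableAt one_ne_zero).hasFDerivAt.comp_hasDerivAt lam₀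
      ((hasDerivAt_const lam₀ x₀).prodMk (hasDerivAt_id lam₀))
  have hinv := ContinuousLinearMap.isInvertible_of_apply_one_ne_zero (hline.deriv ▸ hderiv)
  exact ⟨hswap.implicitFunction one_ne_zero hinv,
    hswap.contDiffAt_implicitFunction one_ne_zero hinv,
    hswap.implicitFunction_apply_self one_ne_zero hinv,
    hswap.eventually_apply_implicitFunction one_ne_zero hinv⟩

theorem Function.IsFixedPt.deriv_comp_self {f : ℝ → ℝ} {x₀ : ℝ} (hfix : IsFixedPt f x₀)
    (hf : DifferentiableAt ℝ f x₀) : deriv (fun y => f (f y)) x₀ = deriv f x₀ * deriv f x₀ := by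
  have hf' : HasDerivAt f (deriv f x₀) (f x₀) := hfix.symm ▸ hf.hasDerivAt
  exact (hf'.comp x₀ hf.hasDerivAt).deriv

theorem apply_ne_self_of_deriv_lt_one {f f' : ℝ → ℝ} {s : Set ℝ} (hs : Convex ℝ s)
    (hf : ∀ y ∈ s, HasDerivAt f (f' y) y) (hf' : ∀ y ∈ s, f' y < 1) {a x : ℝ} (ha : a ∈ s)
    (hfa : f a = a) (hx : x ∈ s) (hxa : x ≠ a) : f x ≠ x := by
  have hanti : StrictAntiOn (fun y => f y - y) s := by
    refine strictAntiOn_of_hasDerivWithinAt_neg hs ?_ (f' := fun y => f' y - 1) ?_ ?_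
    · exact fun y hy => ((hf y hy).continuousAt.sub continuousAt_id).continuousWithinAt
    · exact fun y hy => ((hf y (interior_subset hy)).sub (hasDerivAt_id y)).hasDerivWithinAt
    · exact fun y hy => sub_neg.mpr (hf' y (interior_subset hy))
  intro hfx
  exact hxa (hanti.injOn hx ha (by simp [hfx, hfa]))

theorem eventually_apply_ne_self_of_deriv_lt_one {P : Type*} [NormedAddCommGroup P]
    [NormedSpace ℝ P] {G : P × ℝ → ℝ} {lam₀ : P} {x₀ : ℝ} (hG : ContDiff ℝ 1 G)
    (hfix : ∀ᶠ lam in 𝓝 lam₀, G (lam, x₀) = x₀) (hderiv : deriv (fun x => G (lam₀, x)) x₀ < 1) :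
    ∀ᶠ q in 𝓝 (lam₀, x₀), q.2 ≠ x₀ → G q ≠ q.2 := by
  have hslope : ∀ᶠ q in 𝓝 (lam₀, x₀), deriv (fun y => G (q.1, y)) q.2 < 1 :=
    (hG.deriv_snd (m := 0) (by simp)).continuous.continuousAt.eventually_lt
      continuousAt_const hderiv
  obtain ⟨δ, hδ, hball⟩ := Metric.eventually_nhds_iff_ball.mp
    (hslope.and (continuous_fst.tendsto (lam₀, x₀) |>.eventually hfix))
  have hslice : ∀ q ∈ ball (lam₀, x₀) δ, ∀ y ∈ ball x₀ δ, (q.1, y) ∈ ball (lam₀, x₀) δ :=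
    fun q hq y hy => by
      rw [mem_ball, Prod.dist_eq] at hq ⊢
      exact max_lt ((le_max_left _ _).trans_lt hq) hy
  filter_upwards [ball_mem_nhds _ hδ] with q hq hne
  refine apply_ne_self_of_deriv_lt_one (convex_ball x₀ δ)
    (fun y _ => ((hG.comp (contDiff_const.prodMk contDiff_id)).differentiable one_ne_zero
      y).hasDerivAt) (fun y hy => (hball _ (hslice q hq y hy)).1) (mem_ball_self hδ)
    (hball _ (hslice q hq x₀ (mem_ball_self hδ))).2 ?_ hne
  rw [mem_ball, Prod.dist_eq] at hq
  exact (le_max_right _ _).trans_lt hq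

/-- the period-doubling bifurcation theorem. -/
theorem stmt_1 (G : ℝ × ℝ → ℝ) (hG : ContDiff ℝ 3 G) (lam₀ x₀ : ℝ)
    (h1 : ∃ ε > (0:ℝ), ∀ lam : ℝ, |lam - lam₀| < ε → G (lam, x₀) = x₀)
    (h2 : deriv (fun x => G (lam₀, x)) x₀ = -1)
    (h3 : deriv (fun lam => deriv (fun x => G (lam, G (lam, x))) x₀) lam₀ ≠ 0) :
    ∃ (a b : ℝ), a < x₀ ∧ x₀ < b ∧
      ∃ p : ℝ → ℝ, ContDiffOn ℝ 1 p (Set.Ioo a b) ∧ p x₀ = lam₀ ∧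
        ∀ x ∈ Set.Ioo a b, G (p x, G (p x, x)) = x ∧ (x ≠ x₀ → G (p x, x) ≠ x) := by
  obtain ⟨ε, hε, h1⟩ := h1
  have hfix : ∀ᶠ lam in 𝓝 lam₀, G (lam, x₀) = x₀ :=
    Metric.eventually_nhds_iff.mpr ⟨ε, hε, fun _ hd => h1 _ hd⟩
  set g : ℝ × ℝ → ℝ := fun q => G (q.1, G q)
  have hG₂ : ContDiff ℝ 2 G := hG.of_le (by norm_num)
  have hg : ContDiff ℝ 2 g := hG₂.comp (contDiff_fst.prodMk hG₂)
  have hQ₀ : hadamardQuotient g x₀ (lam₀, x₀) = 1 := by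
    have hGx : DifferentiableAt ℝ (fun x => G (lam₀, x)) x₀ :=
      ((hG.comp (contDiff_const.prodMk contDiff_id)).differentiable (by simp)) x₀
    have hfix₀ : Function.IsFixedPt (fun x => G (lam₀, x)) x₀ := hfix.self_of_nhds
    rw [hadamardQuotient_self, hfix₀.deriv_comp_self hGx, h2]
    norm_num
  have hQlam : deriv (fun lam => hadamardQuotient g x₀ (lam, x₀)) lam₀ ≠ 0 := by
    simpa only [hadamardQuotient_self] using h3
  obtain ⟨p, hp, hp₀, hpQ⟩ := exists_contDiffAt_implicit_fst
    (contDiff_hadamardQuotient hg x₀).contDiffAt hQlam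
  have hp_tendsto : Tendsto (fun x => (p x, x)) (𝓝 x₀) (𝓝 (lam₀, x₀)) :=
    hp₀ ▸ hp.continuousAt.tendsto.prodMk_nhds tendsto_id
  have hisolated := hp_tendsto.eventually (eventually_apply_ne_self_of_deriv_lt_one
    (hG.of_le (by norm_num)) hfix (by rw [h2]; norm_num))
  have hpfix := (hp_tendsto.fst_nhds).eventually hfix
  have hgood : ∀ᶠ x in 𝓝 x₀, ContDiffAt ℝ 1 p x ∧
      G (p x, G (p x, x)) = x ∧ (x ≠ x₀ → G (p x, x) ≠ x) := by
    filter_upwards [hp.eventually (by simp), hpQ, hisolated, hpfix] with x hpx hQx hx hfx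
    refine ⟨hpx, ?_, hx⟩
    have := hadamardQuotient_mul (hg.of_le one_le_two) x₀ (p x, x)
    simp only [hQx, hQ₀, g, hfx] at this
    linarith
  obtain ⟨a, b, hab, hsub⟩ := mem_nhds_iff_exists_Ioo_subset.mp hgood
  exact ⟨a, b, hab.1, hab.2, p, fun x hx => (hsub hx).1.contDiffWithinAt, hp₀,
    fun x hx => (hsub hx).2⟩
end

section
/- Let g₂(x) = x − x(x − x₁) be the canonical quadratic map with x₁ ∈ ℝ. If either −√6 < x₁ < −2 or 2 < x₁ < √6, then the unique 2-cycle {x₀², x₁²} of g₂, where x₀² = (x₁ + 2 + √(x₁² − 4))/2 and x₁² = (x₁ + 2 − √(x₁² − 4))/2, is asymptotically stable; that is, x₀² and x₁² are asymptotically stable fixed points of the second iterate g₂² = g₂ ∘ g₂ (equivalently, |(g₂²)′(x₀²)| = |5 − x₁²| < 1). -/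
/-- A fixed point `p` of `f` is stable. -/
def IsStableFP (f : ℝ → ℝ) (p : ℝ) : Prop :=
  ∀ ε > (0:ℝ), ∃ δ > (0:ℝ), ∀ x : ℝ, |x - p| < δ → ∀ n : ℕ, |f^[n] x - p| < ε

/-- A fixed point `p` of `f` is attracting. -/
def IsAttractingFP (f : ℝ → ℝ) (p : ℝ) : Prop :=
  ∃ η > (0:ℝ), ∀ x : ℝ, |x - p| < η →
    Filter.Tendsto (fun n => f^[n] x) Filter.atTop (nhds p)

/-- A fixed point `p` of `f` is asymptotically stable. -/
def IsAsymptoticallyStableFP (f : ℝ → ℝ) (p : ℝ) : Prop :=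
  IsStableFP f p ∧ IsAttractingFP f p

/-- A fixed point at which the map is a local contraction is asymptotically stable. -/
lemma contraction_asymp (f : ℝ → ℝ) (p k δ : ℝ) (_hfp : f p = p)
    (hk0 : 0 ≤ k) (hk1 : k < 1) (hδ : 0 < δ)
    (hc : ∀ x, |x - p| ≤ δ → |f x - p| ≤ k * |x - p|) :
    IsAsymptoticallyStableFP f p := by
  clear _hfp
  have key : ∀ x, |x - p| ≤ δ → ∀ n : ℕ, |f^[n] x - p| ≤ k ^ n * |x - p| := by
    intro x hx n
    induction n with
    | zero => simp
    | succ n ih =>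
      have h1 : |f^[n] x - p| ≤ δ := by
        calc |f^[n] x - p| ≤ k ^ n * |x - p| := ih
          _ ≤ 1 * δ := by
            apply mul_le_mul (pow_le_one₀ hk0 hk1.le) hx (abs_nonneg _) zero_le_one
          _ = δ := one_mul δ
      rw [Function.iterate_succ_apply']
      calc |f (f^[n] x) - p| ≤ k * |f^[n] x - p| := hc _ h1
        _ ≤ k * (k ^ n * |x - p|) := mul_le_mul_of_nonneg_left ih hk0
        _ = k ^ (n+1) * |x - p| := by ring
  constructor
  · intro ε hε
    refine ⟨min δ ε, lt_min hδ hε, fun x hx n => ?_⟩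
    calc |f^[n] x - p| ≤ k ^ n * |x - p| :=
        key x (le_of_lt (lt_of_lt_of_le hx (min_le_left _ _))) n
      _ ≤ 1 * |x - p| := mul_le_mul_of_nonneg_right (pow_le_one₀ hk0 hk1.le) (abs_nonneg _)
      _ = |x - p| := one_mul _
      _ < ε := lt_of_lt_of_le hx (min_le_right _ _)
  · refine ⟨δ, hδ, fun x hx => ?_⟩
    rw [tendsto_iff_dist_tendsto_zero]
    have h0 : Filter.Tendsto (fun n : ℕ => k ^ n * |x - p|) Filter.atTop (nhds 0) := by
      simpa using (tendsto_pow_atTop_nhds_zero_of_lt_one hk0 hk1).mul_const |x - p|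
    refine squeeze_zero (fun n => dist_nonneg) (fun n => ?_) h0
    rw [Real.dist_eq]
    exact key x hx.le n

/-- A fixed point of the second iterate of the CQM at which `|(g²)'| = |5 - x₁²| < 1`
is asymptotically stable. -/
lemma cqm_aux (x₁ p : ℝ) (g : ℝ → ℝ) (hg : ∀ x, g x = x - x * (x - x₁))
    (hp : g (g p) = p)
    (hd : (x₁ + 1 - 2 * g p) * (x₁ + 1 - 2 * p) = 5 - x₁ ^ 2)
    (hlt : |5 - x₁ ^ 2| < 1) : IsAsymptoticallyStableFP (g ∘ g) p := by
  set φ : ℝ → ℝ := fun x => (x₁ + 1 - 2 * g x) * (x₁ + 1 - 2 * x) with hφ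
  have hgd : ∀ y : ℝ, HasDerivAt g (x₁ + 1 - 2 * y) y := by
    intro y
    have h1 : HasDerivAt (fun x : ℝ => x - x * (x - x₁)) (1 - (1 * (y - x₁) + y * 1)) y :=
      (hasDerivAt_id y).sub ((hasDerivAt_id y).mul ((hasDerivAt_id y).sub_const x₁))
    have h2 : HasDerivAt g (1 - (1 * (y - x₁) + y * 1)) y := by
      apply h1.congr_of_eventuallyEq
      filter_upwards with x using hg x
    convert h2 using 1; ring
  have hfd : ∀ x : ℝ, HasDerivAt (g ∘ g) (φ x) x := fun x =>
    (hgd (g x)).comp x (hgd x)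
  have hφc : Continuous φ := by
    have : Continuous g := by
      have : g = fun x => x - x * (x - x₁) := funext hg
      rw [this]; fun_prop
    rw [hφ]; fun_prop
  set k : ℝ := (1 + |5 - x₁ ^ 2|) / 2 with hk
  have hk0 : 0 ≤ k := by positivity
  have hk1 : k < 1 := by rw [hk]; linarith
  have hφp : |φ p| < k := by
    have : φ p = 5 - x₁ ^ 2 := hd
    rw [this, hk]; linarith [abs_nonneg (5 - x₁ ^ 2)]
  obtain ⟨δ, hδ0, hδ⟩ := Metric.continuousAt_iff.mp hφc.continuousAt (k - |φ p|)
    (by linarith)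
  have hbound : ∀ x ∈ Metric.closedBall p (δ / 2), ‖φ x‖ ≤ k := by
    intro x hx
    have hx' : dist x p < δ := by
      rw [Metric.mem_closedBall] at hx; linarith
    have := hδ hx'
    rw [Real.dist_eq] at this
    have := abs_sub_abs_le_abs_sub (φ x) (φ p)
    rw [Real.norm_eq_abs]; linarith
  apply contraction_asymp (g ∘ g) p k (δ / 2) hp hk0 hk1 (by linarith)
  intro x hx
  have hxs : x ∈ Metric.closedBall p (δ / 2) := by
    rw [Metric.mem_closedBall, Real.dist_eq]; exact hx
  have hps : p ∈ Metric.closedBall p (δ / 2) := Metric.mem_closedBall_self (by linarith)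
  have := Convex.norm_image_sub_le_of_norm_hasDerivWithin_le
    (f := g ∘ g) (f' := φ) (s := Metric.closedBall p (δ / 2))
    (fun y _ => (hfd y).hasDerivWithinAt) hbound (convex_closedBall p (δ / 2)) hps hxs
  rw [Real.norm_eq_abs, Real.norm_eq_abs, show (g ∘ g) p = p from hp] at this
  exact this

/-- asymptotic stability of the 2-cycle of the canonical quadratic map. -/
theorem stmt_5 (x₁ : ℝ)
    (h : (-Real.sqrt 6 < x₁ ∧ x₁ < -2) ∨ (2 < x₁ ∧ x₁ < Real.sqrt 6)) :
    let g : ℝ → ℝ := fun x => x - x * (x - x₁)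
    let a : ℝ := (x₁ + 2 + Real.sqrt (x₁ ^ 2 - 4)) / 2
    let b : ℝ := (x₁ + 2 - Real.sqrt (x₁ ^ 2 - 4)) / 2
    IsAsymptoticallyStableFP (g ∘ g) a ∧ IsAsymptoticallyStableFP (g ∘ g) b ∧
    |5 - x₁ ^ 2| < 1 := by
  intro g a b
  have h6 : (Real.sqrt 6) ^ 2 = 6 := Real.sq_sqrt (by norm_num)
  have h6' : (0:ℝ) ≤ Real.sqrt 6 := Real.sqrt_nonneg 6
  have h4 : 4 < x₁ ^ 2 := by rcases h with ⟨h1, h2⟩ | ⟨h1, h2⟩ <;> nlinarith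
  have hx6 : x₁ ^ 2 < 6 := by rcases h with ⟨h1, h2⟩ | ⟨h1, h2⟩ <;> nlinarith
  have hs : (Real.sqrt (x₁ ^ 2 - 4)) ^ 2 = x₁ ^ 2 - 4 := Real.sq_sqrt (by linarith)
  have gab : g a = b := by
    show (x₁ + 2 + Real.sqrt (x₁ ^ 2 - 4)) / 2 - (x₁ + 2 + Real.sqrt (x₁ ^ 2 - 4)) / 2 *
      ((x₁ + 2 + Real.sqrt (x₁ ^ 2 - 4)) / 2 - x₁) = (x₁ + 2 - Real.sqrt (x₁ ^ 2 - 4)) / 2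
    linear_combination (-(1:ℝ)/4) * hs
  have gba : g b = a := by
    show (x₁ + 2 - Real.sqrt (x₁ ^ 2 - 4)) / 2 - (x₁ + 2 - Real.sqrt (x₁ ^ 2 - 4)) / 2 *
      ((x₁ + 2 - Real.sqrt (x₁ ^ 2 - 4)) / 2 - x₁) = (x₁ + 2 + Real.sqrt (x₁ ^ 2 - 4)) / 2
    linear_combination (-(1:ℝ)/4) * hs
  have hlt : |5 - x₁ ^ 2| < 1 := by
    rw [abs_lt]; constructor <;> linarith
  have hda : (x₁ + 1 - 2 * g a) * (x₁ + 1 - 2 * a) = 5 - x₁ ^ 2 := by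
    rw [gab]
    show (x₁ + 1 - 2 * ((x₁ + 2 - Real.sqrt (x₁ ^ 2 - 4)) / 2)) *
      (x₁ + 1 - 2 * ((x₁ + 2 + Real.sqrt (x₁ ^ 2 - 4)) / 2)) = 5 - x₁ ^ 2
    linear_combination (-1:ℝ) * hs
  have hdb : (x₁ + 1 - 2 * g b) * (x₁ + 1 - 2 * b) = 5 - x₁ ^ 2 := by
    rw [gba]
    show (x₁ + 1 - 2 * ((x₁ + 2 + Real.sqrt (x₁ ^ 2 - 4)) / 2)) *
      (x₁ + 1 - 2 * ((x₁ + 2 - Real.sqrt (x₁ ^ 2 - 4)) / 2)) = 5 - x₁ ^ 2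
    linear_combination (-1:ℝ) * hs
  refine ⟨cqm_aux x₁ a g (fun x => rfl) (by rw [gab, gba]) hda hlt,
    cqm_aux x₁ b g (fun x => rfl) (by rw [gba, gab]) hdb hlt, hlt⟩
end

section
/- Let x₁ : ℝ → ℝ be continuously differentiable with x₁(λ₀) = −2 and x₁′(λ₀) ≠ 0, and consider the one-parameter family of canonical quadratic maps g₂(x, λ) = x − x(x − x₁(λ)). Then the zero fixed point undergoes a period-doubling bifurcation at λ = λ₀: there exist an open interval I around 0 and a C¹ function p : I → ℝ with p(0) = λ₀ such that g₂(g₂(x, p(x)), p(x)) = x for every x ∈ I, while g₂(x, p(x)) ≠ x for every x ∈ I with x ≠ 0. -/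
/-!
Writing `a = x₁(λ)`, the map is `g_a(x) = x (1 + a - x)` and
`g_a(g_a(x)) - x = -x (x - a) (x² - (a + 2) x + (a + 2))`.
The last factor vanishes exactly when `a = q(x) := -2 + x² / (x - 1)`, a smooth curve through
`q(0) = -2`; since `q(x) = x` only for `x = 2`, the points of this curve near `0` other than `0`
are not fixed. As `x₁'(λ₀) ≠ 0`, the inverse function theorem turns `a = q(x)` into a
`C¹` parameter curve `λ = p(x) = x₁⁻¹(q(x))`.
-/

open Filter Topology
open scoped ContDiff

section Lift

variable {𝕂 : Type*} [RCLike 𝕂] {E F G : Type*}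
  [NormedAddCommGroup E] [NormedSpace 𝕂 E] [CompleteSpace E]
  [NormedAddCommGroup F] [NormedSpace 𝕂 F] [NormedAddCommGroup G] [NormedSpace 𝕂 G]

theorem ContDiffAt.exists_contDiffAt_lift {n : WithTop ℕ∞} {f : E → F} {f' : E ≃L[𝕂] F} {a : E}
    {q : G → F} {x₀ : G} (hf : ContDiffAt 𝕂 n f a) (hf' : HasFDerivAt f (f' : E →L[𝕂] F) a)
    (hq : ContDiffAt 𝕂 n q x₀) (hqx₀ : q x₀ = f a) (hn : n ≠ 0) (hn' : n ≠ ∞) :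
    ∃ p : G → E, p x₀ = a ∧ ∀ᶠ x in 𝓝 x₀, ContDiffAt 𝕂 n p x ∧ f (p x) = q x := by
  set inv := hf.localInverse hf' hn
  have hinv_smooth : ∀ᶠ y in 𝓝 (f a), ContDiffAt 𝕂 n inv y :=
    (hf.to_localInverse hf' hn).eventually hn'
  have hinv_right : ∀ᶠ y in 𝓝 (f a), f (inv y) = y :=
    (hf.hasStrictFDerivAt' hf' hn).eventually_right_inverse
  have hq_tendsto : Tendsto q (𝓝 x₀) (𝓝 (f a)) := hqx₀ ▸ hq.continuousAt.tendsto
  refine ⟨inv ∘ q, by simp [hqx₀, inv, hf.localInverse_apply_image], ?_⟩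
  filter_upwards [hq_tendsto.eventually hinv_smooth, hq_tendsto.eventually hinv_right,
    hq.eventually hn'] with x hx_inv hx_right hx_q
  exact ⟨hx_inv.comp x hx_q, hx_right⟩

end Lift

def canonicalQuadratic (a x : ℝ) : ℝ := x - x * (x - a)

noncomputable def periodTwoParam (x : ℝ) : ℝ := -2 + x ^ 2 / (x - 1)

theorem periodTwoParam_zero : periodTwoParam 0 = -2 := by norm_num [periodTwoParam]

theorem contDiffAt_periodTwoParam {n : WithTop ℕ∞} {x : ℝ} (hx : x ≠ 1) :
    ContDiffAt ℝ n periodTwoParam x :=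
  contDiffAt_const.add <| (contDiffAt_id.pow 2).div (contDiffAt_id.sub contDiffAt_const)
    (sub_ne_zero.mpr hx)

theorem canonicalQuadratic_periodTwoParam_iterate {x : ℝ} (hx : x ≠ 1) :
    canonicalQuadratic (periodTwoParam x) (canonicalQuadratic (periodTwoParam x) x) = x := by
  have hx' : x - 1 ≠ 0 := sub_ne_zero.mpr hx
  simp only [canonicalQuadratic, periodTwoParam]
  field_simp
  ring

theorem canonicalQuadratic_periodTwoParam_ne {x : ℝ} (hx₀ : x ≠ 0) (hx₁ : x ≠ 1) (hx₂ : x ≠ 2) :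
    canonicalQuadratic (periodTwoParam x) x ≠ x := by
  intro h
  have hfix : periodTwoParam x = x := by
    have : x * (x - periodTwoParam x) = 0 := by
      simp only [canonicalQuadratic] at h
      linarith
    linarith [(mul_eq_zero.mp this).resolve_left hx₀]
  have hx' : x - 1 ≠ 0 := sub_ne_zero.mpr hx₁
  apply hx₂
  simp only [periodTwoParam] at hfix
  field_simp at hfix
  linarith

/-- period-doubling bifurcation of the zero fixed point of the
canonical quadratic map family at a parameter value where `x₁(λ₀) = -2`. -/
theorem stmt_6 (x₁ : ℝ → ℝ) (hx₁ : ContDiff ℝ 1 x₁) (lam₀ : ℝ)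
    (h0 : x₁ lam₀ = -2) (h1 : deriv x₁ lam₀ ≠ 0) :
    let g : ℝ → ℝ → ℝ := fun x lam => x - x * (x - x₁ lam)
    ∃ (a b : ℝ), a < 0 ∧ 0 < b ∧
      ∃ p : ℝ → ℝ, ContDiffOn ℝ 1 p (Set.Ioo a b) ∧ p 0 = lam₀ ∧
        ∀ x ∈ Set.Ioo a b, g (g x (p x)) (p x) = x ∧ (x ≠ 0 → g x (p x) ≠ x) := by
  intro g
  have hderiv : HasDerivAt x₁ (deriv x₁ lam₀) lam₀ := (hx₁.differentiable one_ne_zero lam₀).hasDerivAt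
  obtain ⟨p, hp0, hp⟩ := hx₁.contDiffAt.exists_contDiffAt_lift (hderiv.hasFDerivAt_equiv h1)
    (contDiffAt_periodTwoParam zero_ne_one) (by rw [periodTwoParam_zero, h0]) one_ne_zero
    (by decide)
  obtain ⟨ε, hε, hball⟩ := Metric.eventually_nhds_iff_ball.mp
    (hp.and (Ioo_mem_nhds (by norm_num : (-1 : ℝ) < 0) (by norm_num : (0 : ℝ) < 1)))
  rw [Real.ball_eq_Ioo, zero_sub, zero_add] at hball
  refine ⟨-ε, ε, neg_neg_iff_pos.mpr hε, hε, p,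
    fun x hx ↦ (hball x hx).1.1.contDiffWithinAt, hp0, fun x hx ↦ ?_⟩
  obtain ⟨⟨-, hpx⟩, hx_lo, hx_hi⟩ := hball x hx
  have hg : ∀ y, g y (p x) = canonicalQuadratic (periodTwoParam x) y := fun y ↦ by
    simp only [g, canonicalQuadratic, hpx]
  rw [hg, hg]
  exact ⟨canonicalQuadratic_periodTwoParam_iterate (by linarith),
    fun hx₀ ↦ canonicalQuadratic_periodTwoParam_ne hx₀ (by linarith) (by linarith)⟩
end

section
/- Let x₁ : ℝ → ℝ be continuously differentiable with x₁(λ₀) = −√6 and x₁′(λ₀) ≠ 0, and consider the family g₂(x, λ) = x − x(x − x₁(λ)). For λ with x₁(λ)² > 4, let x₀²(λ) = (x₁(λ) + 2 + √(x₁(λ)² − 4))/2 be the period-2 point of g₂(·, λ). Then the period-doubling bifurcation conditions hold for the second iterate g₂² at (x₀²(λ₀), λ₀): (i) the multiplier of the 2-cycle satisfies (g₂²)′(x₀²(λ₀), λ₀) = 5 − x₁(λ₀)² = −1; and (ii) the function λ ↦ (g₂⁴)′(x₀²(λ), λ) equals (5 − x₁(λ)²)² and has derivative −4√6 · x₁′(λ₀)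 ≠ 0 at λ = λ₀. -/
/-!
The 2-cycle `{p, q}` of `x ↦ x - x (x - a)` is characterised by `p + q = pq = a + 2`, so by the
chain rule its multiplier is `(1 + a - 2p)(1 + a - 2q) = 5 - a²`, and the fourth iterate has
derivative `(5 - a²)²` at `p`. Since `x₁(λ)² > 4` near `λ₀`, the `λ`-derivative of the latter
at `λ₀` is that of `(5 - x₁(λ)²)²`, namely `-4 x₁ (5 - x₁²) x₁' = -4√6 x₁'`.
-/

open Filter Topology

noncomputable def quadMap (a x : ℝ) : ℝ := x - x * (x - a)

lemma hasDerivAt_quadMap (a x : ℝ) : HasDerivAt (quadMap a) (1 + a - 2 * x) x := by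
  have h := (hasDerivAt_id x).sub ((hasDerivAt_id x).mul ((hasDerivAt_id x).sub_const a))
  simp only [id_eq] at h
  exact h.congr_deriv (by ring)

section TwoCycle

variable {a p q : ℝ}

lemma quadMap_eq_of_add_eq_of_mul_eq (hsum : p + q = a + 2) (hprod : p * q = a + 2) :
    quadMap a p = q := by
  unfold quadMap
  linear_combination (-1 - p) * hsum + hprod

lemma quadMap_comp_quadMap_eq_self (hsum : p + q = a + 2) (hprod : p * q = a + 2) :
    (quadMap a ∘ quadMap a) p = p := by
  rw [Function.comp_apply, quadMap_eq_of_add_eq_of_mul_eq hsum hprod,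
    quadMap_eq_of_add_eq_of_mul_eq (p := q) (q := p) (by linarith) (by linarith)]

lemma hasDerivAt_quadMap_comp_quadMap (hsum : p + q = a + 2) (hprod : p * q = a + 2) :
    HasDerivAt (quadMap a ∘ quadMap a) (5 - a ^ 2) p := by
  have hq : HasDerivAt (quadMap a) (1 + a - 2 * q) (quadMap a p) := by
    rw [quadMap_eq_of_add_eq_of_mul_eq hsum hprod]
    exact hasDerivAt_quadMap a q
  exact (hq.comp p (hasDerivAt_quadMap a p)).congr_deriv
    (by linear_combination (-2 * (1 + a)) * hsum + 4 * hprod)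

lemma hasDerivAt_quadMap_iterate_four (hsum : p + q = a + 2) (hprod : p * q = a + 2) :
    HasDerivAt (quadMap a ∘ quadMap a)^[2] ((5 - a ^ 2) ^ 2) p :=
  HasDerivAt.iterate p (hasDerivAt_quadMap_comp_quadMap hsum hprod)
    (quadMap_comp_quadMap_eq_self hsum hprod) 2

end TwoCycle

lemma twoCyclePoints_mul {a : ℝ} (ha : 4 ≤ a ^ 2) :
    (a + 2 + √(a ^ 2 - 4)) / 2 * ((a + 2 - √(a ^ 2 - 4)) / 2) = a + 2 := by
  linear_combination (-1 / 4 : ℝ) * Real.sq_sqrt (sub_nonneg.2 ha)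

lemma hasDerivAt_five_sub_sq_sq {x : ℝ → ℝ} {d t : ℝ} (hx : HasDerivAt x d t) :
    HasDerivAt (fun s => (5 - x s ^ 2) ^ 2) (-4 * x t * (5 - x t ^ 2) * d) t :=
  (((hx.fun_pow 2).const_sub 5).fun_pow 2).congr_deriv (by push_cast; ring)

theorem stmt_7_general (x₁ : ℝ → ℝ) (lam₀ : ℝ)
    (h0 : x₁ lam₀ = -Real.sqrt 6) (h1 : deriv x₁ lam₀ ≠ 0) :
    let g : ℝ → ℝ → ℝ := fun x lam => x - x * (x - x₁ lam)
    let xp : ℝ → ℝ := fun lam => (x₁ lam + 2 + Real.sqrt ((x₁ lam) ^ 2 - 4)) / 2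
    let F : ℝ → ℝ := fun lam =>
      deriv (fun x => g (g (g (g x lam) lam) lam) lam) (xp lam)
    (deriv (fun x => g (g x lam₀) lam₀) (xp lam₀) = 5 - (x₁ lam₀) ^ 2 ∧
      5 - (x₁ lam₀) ^ 2 = -1) ∧
    (∀ lam : ℝ, (x₁ lam) ^ 2 > 4 → F lam = (5 - (x₁ lam) ^ 2) ^ 2) ∧
    deriv F lam₀ = -4 * Real.sqrt 6 * deriv x₁ lam₀ ∧ deriv F lam₀ ≠ 0 := by
  intro g xp F
  have hsq : x₁ lam₀ ^ 2 = 6 := by rw [h0, neg_sq, Real.sq_sqrt (by norm_num)]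
  have hgt : 4 < x₁ lam₀ ^ 2 := by rw [hsq]; norm_num
  have hF : ∀ lam, x₁ lam ^ 2 > 4 → F lam = (5 - x₁ lam ^ 2) ^ 2 := fun lam h =>
    (hasDerivAt_quadMap_iterate_four (by ring) (twoCyclePoints_mul h.le)).deriv
  have hx : HasDerivAt x₁ (deriv x₁ lam₀) lam₀ :=
    (differentiableAt_of_deriv_ne_zero h1).hasDerivAt
  have hFeq : F =ᶠ[𝓝 lam₀] fun lam => (5 - x₁ lam ^ 2) ^ 2 :=
    ((hx.continuousAt.pow 2).eventually (lt_mem_nhds hgt)).mono hF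
  have hdF : deriv F lam₀ = -4 * √6 * deriv x₁ lam₀ := by
    rw [hFeq.deriv_eq, (hasDerivAt_five_sub_sq_sq hx).deriv, hsq, h0]
    ring
  have hmult := hasDerivAt_quadMap_comp_quadMap (by ring) (twoCyclePoints_mul hgt.le)
  refine ⟨⟨hmult.deriv, by rw [hsq]; norm_num⟩, hF, hdF, ?_⟩
  rw [hdF]
  exact mul_ne_zero (mul_ne_zero (by norm_num) (by positivity)) h1

/-- the period-doubling bifurcation conditions for the 2-cycle of
the canonical quadratic map family at a parameter value where `x₁(λ₀) = -√6`. -/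
theorem stmt_7 (x₁ : ℝ → ℝ) (hx₁ : ContDiff ℝ 1 x₁) (lam₀ : ℝ)
    (h0 : x₁ lam₀ = -Real.sqrt 6) (h1 : deriv x₁ lam₀ ≠ 0) :
    let g : ℝ → ℝ → ℝ := fun x lam => x - x * (x - x₁ lam)
    let xp : ℝ → ℝ := fun lam => (x₁ lam + 2 + Real.sqrt ((x₁ lam) ^ 2 - 4)) / 2
    let F : ℝ → ℝ := fun lam =>
      deriv (fun x => g (g (g (g x lam) lam) lam) lam) (xp lam)
    (deriv (fun x => g (g x lam₀) lam₀) (xp lam₀) = 5 - (x₁ lam₀) ^ 2 ∧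
      5 - (x₁ lam₀) ^ 2 = -1) ∧
    (∀ lam : ℝ, (x₁ lam) ^ 2 > 4 → F lam = (5 - (x₁ lam) ^ 2) ^ 2) ∧
    deriv F lam₀ = -4 * Real.sqrt 6 * deriv x₁ lam₀ ∧ deriv F lam₀ ≠ 0 :=
  stmt_7_general x₁ lam₀ h0 h1
end

section
/- Let a, b, c be pairwise distinct real numbers and let f(x) = x + (x − a)(x − b)(x − c) be a cubic map with positive leading coefficient (M > 0) whose fixed points are exactly a, b, c. Then at most one of the fixed points a, b, c is attracting, in the sense that |f′| < 1 can hold at no more than one of the three points. -/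
/-! At a fixed point `p` of `f x = x + (x - a) * (x - b) * (x - c)` the multiplier is
`1 + t` with `t` the product of the differences between `p` and the other two fixed points, and
`|1 + t| < 1` forces `t < 0`. For two fixed points `x`, `y` with third fixed point `z` these
products sum to `(x - y) * (x - z) + (y - x) * (y - z) = (x - y) ^ 2 ≥ 0`, so they cannot
both be negative. -/

lemma hasDerivAt_cubic (a b c x : ℝ) :
    HasDerivAt (fun x => x + (x - a) * (x - b) * (x - c))
      (1 + ((x - b) * (x - c) + (x - a) * (x - c) + (x - a) * (x - b))) x := by
  refine ((hasDerivAt_id' x).fun_add ((((hasDerivAt_id' x).sub_const a).fun_mul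
    ((hasDerivAt_id' x).sub_const b)).fun_mul ((hasDerivAt_id' x).sub_const c))).congr_deriv ?_
  ring

lemma not_abs_one_add_mul_sub_lt_one_and (x y z : ℝ) :
    ¬(|1 + (x - y) * (x - z)| < 1 ∧ |1 + (y - x) * (y - z)| < 1) := by
  rintro ⟨hx, hy⟩
  have hsum : (x - y) * (x - z) + (y - x) * (y - z) = (x - y) ^ 2 := by ring
  linarith [(abs_lt.mp hx).2, (abs_lt.mp hy).2, sq_nonneg (x - y)]

theorem stmt_13_general (a b c : ℝ) :
    let f : ℝ → ℝ := fun x => x + (x - a) * (x - b) * (x - c)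
    ¬(|deriv f a| < 1 ∧ |deriv f b| < 1) ∧
    ¬(|deriv f a| < 1 ∧ |deriv f c| < 1) ∧
    ¬(|deriv f b| < 1 ∧ |deriv f c| < 1) := by
  intro f
  have hf (x : ℝ) := (hasDerivAt_cubic a b c x).deriv
  have da : deriv f a = 1 + (a - b) * (a - c) := by rw [hf]; ring
  have db : deriv f b = 1 + (b - a) * (b - c) := by rw [hf]; ring
  have dc : deriv f c = 1 + (c - a) * (c - b) := by rw [hf]; ring
  refine ⟨?_, ?_, ?_⟩
  · rw [da, db]
    exact not_abs_one_add_mul_sub_lt_one_and a b c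
  · rw [da, dc, mul_comm (a - b)]
    exact not_abs_one_add_mul_sub_lt_one_and a c b
  · rw [db, dc, mul_comm (b - a), mul_comm (c - a)]
    exact not_abs_one_add_mul_sub_lt_one_and b c a

/-- a cubic map with three distinct real fixed points and
positive leading coefficient has at most one attracting fixed point. -/
theorem stmt_13 (a b c : ℝ) (hab : a ≠ b) (hac : a ≠ c) (hbc : b ≠ c) :
    let f : ℝ → ℝ := fun x => x + (x - a) * (x - b) * (x - c)
    ¬(|deriv f a| < 1 ∧ |deriv f b| < 1) ∧
    ¬(|deriv f a| < 1 ∧ |deriv f c| < 1) ∧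
    ¬(|deriv f b| < 1 ∧ |deriv f c| < 1) :=
  stmt_13_general a b c
end

section
/- Consider the canonical cubic map with a double fixed point at zero, g(x) = x + x²(x − x₁) with s = 1 (M > 0) and x₁ > 0 (so the fixed point 0 has multiplicity two and g′(0) = 1, a nonhyperbolic fixed point). Then 0 is unstable, but it is semiasymptotically stable from the right: for every ε > 0 there exists δ > 0 such that 0 < x₀ < δ implies |gⁿ(x₀)| < ε for all n ≥ 0, and there exists η > 0 such that 0 < x₀ < η implies gⁿ(x₀) → 0 as n → ∞; on the other hand, for every x₀ < 0 sufficiently close to 0 one has g(x₀) < x₀, so orbits starting just to the left of 0 move strictly away from 0. -/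
/-- the double fixed point `0` of `g(x) = x + x²(x - x₁)` with
`x₁ > 0` is unstable but semiasymptotically stable from the right. -/
theorem stmt_16 (x₁ : ℝ) (hx₁ : 0 < x₁) :
    let g : ℝ → ℝ := fun x => x + x ^ 2 * (x - x₁)
    ¬ IsStableFP g 0 ∧
    (∀ ε > (0:ℝ), ∃ δ > (0:ℝ), ∀ x₀ : ℝ, 0 < x₀ → x₀ < δ →
      ∀ n : ℕ, |g^[n] x₀| < ε) ∧
    (∃ η > (0:ℝ), ∀ x₀ : ℝ, 0 < x₀ → x₀ < η →
      Filter.Tendsto (fun n => g^[n] x₀) Filter.atTop (nhds 0)) ∧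
    (∃ δ > (0:ℝ), ∀ x₀ : ℝ, -δ < x₀ → x₀ < 0 → g x₀ < x₀) := by
  intro g
  have hgdef : ∀ x : ℝ, g x = x + x ^ 2 * (x - x₁) := fun x => rfl
  set m := min x₁ x₁⁻¹ with hmdef
  have hm0 : 0 < m := lt_min hx₁ (inv_pos.mpr hx₁)
  have hmem : ∀ x : ℝ, 0 < x → x < m → 0 < g x ∧ g x < x := by
    intro x hx hxm
    have h1 : x < x₁ := lt_of_lt_of_le hxm (min_le_left _ _)
    have h2 : x < x₁⁻¹ := lt_of_lt_of_le hxm (min_le_right _ _)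
    have h3 : x * x₁ < 1 := by
      have := mul_lt_mul_of_pos_right h2 hx₁
      rwa [inv_mul_cancel₀ (ne_of_gt hx₁)] at this
    constructor
    · rw [hgdef]; nlinarith [mul_pos hx hx]
    · rw [hgdef]; nlinarith [mul_pos (mul_pos hx hx) (sub_pos.mpr h1)]
  -- orbit lemma for positive starting points
  have horb : ∀ x₀ : ℝ, 0 < x₀ → x₀ < m → ∀ n : ℕ,
      0 < g^[n] x₀ ∧ g^[n] x₀ ≤ x₀ := by
    intro x₀ hx0 hxm n
    induction n with
    | zero => simp [hx0.le, hx0]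
    | succ n ih =>
      rw [Function.iterate_succ_apply']
      have h := hmem _ ih.1 (lt_of_le_of_lt ih.2 hxm)
      exact ⟨h.1, le_trans h.2.le ih.2⟩
  refine ⟨?_, ?_, ?_, ?_⟩
  · -- instability
    intro hst
    obtain ⟨δ, hδ, hδ'⟩ := hst 1 one_pos
    set a : ℝ := -(min δ 1) / 2 with ha
    have hmin : 0 < min δ 1 := lt_min hδ one_pos
    have ha0 : a < 0 := by rw [ha]; linarith
    have haδ : |a - 0| < δ := by
      rw [sub_zero, abs_of_neg ha0, ha]
      have : min δ 1 ≤ δ := min_le_left _ _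
      linarith
    set c : ℝ := a ^ 2 * (a - x₁) with hc
    have hc0 : c < 0 := by
      have ha2 : 0 < a ^ 2 := by nlinarith [mul_pos (neg_pos.mpr ha0) (neg_pos.mpr ha0)]
      rw [hc]; nlinarith
    have key : ∀ n : ℕ, g^[n] a ≤ a + n * c := by
      intro n
      induction n with
      | zero => simp
      | succ n ih =>
        rw [Function.iterate_succ_apply']
        set y := g^[n] a with hy
        have hya : y ≤ a := by
          have : (n : ℝ) * c ≤ 0 := mul_nonpos_of_nonneg_of_nonpos (Nat.cast_nonneg n) hc0.le
          linarith
        have hstep : g y ≤ y + c := by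
          rw [hgdef, hc]
          have e1 : 0 ≤ a - y := sub_nonneg.mpr hya
          have e2 : 0 ≤ y ^ 2 + y * a + a ^ 2 := by
            nlinarith [sq_nonneg (y + a), sq_nonneg y, sq_nonneg a]
          have e3 : 0 ≤ (a - y) * (y ^ 2 + y * a + a ^ 2) := mul_nonneg e1 e2
          have e4 : 0 ≤ (a - y) * (-(y + a)) := mul_nonneg e1 (by linarith)
          have e5 : 0 ≤ x₁ * ((a - y) * (-(y + a))) := mul_nonneg hx₁.le e4
          nlinarith [e3, e5]
        push_cast
        linarith
    obtain ⟨n, hn⟩ := exists_nat_gt ((a + 1) / (-c))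
    have hnc : a + 1 < n * (-c) := by
      rw [div_lt_iff₀ (by linarith)] at hn
      linarith
    have h1 := hδ' a haδ n
    rw [sub_zero, abs_lt] at h1
    have := key n
    nlinarith
  · -- stability from the right
    intro ε hε
    refine ⟨min ε m, lt_min hε hm0, fun x₀ hx0 hxδ n => ?_⟩
    have hxm : x₀ < m := lt_of_lt_of_le hxδ (min_le_right _ _)
    have h := horb x₀ hx0 hxm n
    rw [abs_of_pos h.1]
    exact lt_of_le_of_lt h.2 (lt_of_lt_of_le hxδ (min_le_left _ _))
  · -- asymptotic from the right
    refine ⟨m, hm0, fun x₀ hx0 hxm => ?_⟩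
    have hdec : ∀ n : ℕ, g^[n+1] x₀ < g^[n] x₀ := by
      intro n
      rw [Function.iterate_succ_apply']
      exact (hmem _ (horb x₀ hx0 hxm n).1 (lt_of_le_of_lt (horb x₀ hx0 hxm n).2 hxm)).2
    have hanti : Antitone (fun n => g^[n] x₀) :=
      (strictAnti_nat_of_succ_lt hdec).antitone
    have hbdd : BddBelow (Set.range fun n => g^[n] x₀) := by
      refine ⟨0, ?_⟩
      rintro y ⟨n, rfl⟩
      exact (horb x₀ hx0 hxm n).1.le
    have hconv := tendsto_atTop_ciInf hanti hbdd
    set L := ⨅ n, g^[n] x₀ with hL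
    have hL0 : 0 ≤ L := le_ciInf fun n => (horb x₀ hx0 hxm n).1.le
    have hLx : L < x₁ := by
      have h1 : L ≤ g^[0] x₀ := ciInf_le hbdd 0
      simp only [Function.iterate_zero_apply] at h1
      exact lt_of_le_of_lt h1 (lt_of_lt_of_le hxm (min_le_left _ _))
    have hgc : Continuous g := by
      simp only [g]; continuity
    have h1 : Filter.Tendsto (fun n => g (g^[n] x₀)) Filter.atTop (nhds (g L)) :=
      (hgc.tendsto L).comp hconv
    have h2 : Filter.Tendsto (fun n => g (g^[n] x₀)) Filter.atTop (nhds L) := by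
      have h := hconv.comp (Filter.tendsto_add_atTop_nat 1)
      simp only [Function.comp_def, Function.iterate_succ_apply'] at h
      exact h
    have hfix : g L = L := tendsto_nhds_unique h1 h2
    have hLeq : L ^ 2 * (L - x₁) = 0 := by
      have := hgdef L
      rw [hfix] at this
      linarith
    have hLzero : L = 0 := by
      rcases mul_eq_zero.mp hLeq with h | h
      · exact pow_eq_zero_iff (by norm_num) |>.mp h
      · exfalso; linarith
    rw [← hLzero]
    exact hconv
  · -- left side
    refine ⟨1, one_pos, fun x₀ _ hx0 => ?_⟩
    rw [hgdef]
    nlinarith [mul_pos (mul_pos (neg_pos.mpr hx0) (neg_pos.mpr hx0))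
      (by linarith : (0:ℝ) < x₁ - x₀)]
end

section
/- Let n ≥ 2, let M be a nonzero real number with s = sgn(M) and M̃ = |M|, and let y₀, y₁, …, y_{n−1} be real numbers. Define the linear factors form map f_n(y) = y + (−1)^{n−1}·s·M̃·∏_{i=0}^{n−1}(y − y_i), the transformation T_n(x) = s·M̃^{−1/(n−1)}·x + y₀, the transformed fixed points x_i = s·M̃^{1/(n−1)}·(y_i − y₀) for i = 1, …, n−1, and the canonical polynomial map g_n(x) = x + (−1)^{n−1}·sⁿ·x·∏_{i=1}^{n−1}(x − x_i). Then f_n(T_n(x)) = T_n(g_n(x)) for every x ∈ ℝ; since T_n is an affine homeomorphism of ℝ, the maps f_n and g_n are topologically conjugate. -/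
/-!
Writing `T x = c * x + y₀` with `c = s * M̃ ^ (-1/(n-1))`, every factor `T x - yᵢ` equals
`c * (x - xᵢ)` with `xᵢ = c⁻¹ * (yᵢ - y₀)`, and `x₀ = 0`. Hence
`f (T x) = T (x + k * c ^ (n-1) * x * ∏ (x - xᵢ))` for the leading factor `k = (-1)^(n-1) s M̃`,
and the exponent in `c` is chosen so that `s M̃ c ^ (n-1) = s ^ n`.
-/

open Finset

theorem prod_range_affine_sub {K : Type*} [Field K] {n : ℕ} (hn : 0 < n) {c : K} (hc : c ≠ 0)
    (Y : ℕ → K) (x : K) :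
    ∏ i ∈ range n, (c * x + Y 0 - Y i) =
      c ^ n * (x * ∏ i ∈ Ico 1 n, (x - c⁻¹ * (Y i - Y 0))) := by
  have hfactor : ∀ i, c * x + Y 0 - Y i = c * (x - c⁻¹ * (Y i - Y 0)) := fun i => by
    field_simp
    ring
  rw [prod_congr rfl fun i _ => hfactor i, prod_mul_distrib, prod_const, card_range,
    prod_range_eq_mul_Ico _ hn]
  simp

theorem add_mul_prod_affine_conj {K : Type*} [Field K] {n : ℕ} (hn : 0 < n) {c : K}
    (hc : c ≠ 0) (k : K) (Y : ℕ → K) (x : K) :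
    (c * x + Y 0) + k * ∏ i ∈ range n, (c * x + Y 0 - Y i) =
      c * (x + k * c ^ (n - 1) * x * ∏ i ∈ Ico 1 n, (x - c⁻¹ * (Y i - Y 0))) + Y 0 := by
  rw [prod_range_affine_sub hn hc, ← Nat.sub_add_cancel hn, pow_succ, Nat.add_sub_cancel]
  ring

theorem Real.rpow_neg_one_div_sub_one_pow {a : ℝ} (ha : 0 < a) {n : ℕ} (hn : 2 ≤ n) :
    (a ^ (-(1 : ℝ) / ((n : ℝ) - 1))) ^ (n - 1) = a⁻¹ := by
  have hn1 : ((n : ℝ) - 1) ≠ 0 := by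
    have : (2 : ℝ) ≤ n := by exact_mod_cast hn
    linarith
  rw [← Real.rpow_natCast, ← Real.rpow_mul ha.le, Nat.cast_sub (by omega), Nat.cast_one,
    div_mul_cancel₀ _ hn1, Real.rpow_neg_one]

/-- the linear factors form map of degree `n` is conjugate,
via the affine homeomorphism `T_n`, to the canonical polynomial map. -/
theorem stmt_17 (n : ℕ) (hn : 2 ≤ n) (M : ℝ) (hM : M ≠ 0)
    (s Mt : ℝ) (hs : s = if 0 < M then 1 else -1) (hMt : Mt = |M|)
    (Y : ℕ → ℝ) :
    let f : ℝ → ℝ := fun y =>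
      y + (-1) ^ (n - 1) * s * Mt * ∏ i ∈ Finset.range n, (y - Y i)
    let T : ℝ → ℝ := fun x => s * Mt ^ (-(1 : ℝ) / ((n : ℝ) - 1)) * x + Y 0
    let X : ℕ → ℝ := fun i => s * Mt ^ ((1 : ℝ) / ((n : ℝ) - 1)) * (Y i - Y 0)
    let g : ℝ → ℝ := fun x =>
      x + (-1) ^ (n - 1) * s ^ n * x * ∏ i ∈ Finset.Ico 1 n, (x - X i)
    (∀ x : ℝ, f (T x) = T (g x)) ∧ ∃ h : ℝ ≃ₜ ℝ, ∀ x : ℝ, h x = T x := by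
  intro f T X g
  have hMt_pos : 0 < Mt := hMt ▸ abs_pos.mpr hM
  have hs_sq : s * s = 1 := by rw [hs]; split <;> norm_num
  set c := s * Mt ^ (-(1 : ℝ) / ((n : ℝ) - 1))
  have hc : c ≠ 0 := mul_ne_zero (left_ne_zero_of_mul_eq_one hs_sq) (by positivity)
  have hX : ∀ i, X i = c⁻¹ * (Y i - Y 0) := fun i => by
    rw [mul_inv, inv_eq_of_mul_eq_one_left hs_sq, neg_div, Real.rpow_neg hMt_pos.le, inv_inv]
  have hk : (-1) ^ (n - 1) * s * Mt * c ^ (n - 1) = (-1) ^ (n - 1) * s ^ n := by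
    rw [mul_pow, Real.rpow_neg_one_div_sub_one_pow hMt_pos hn,
      ← Nat.sub_add_cancel (by omega : 1 ≤ n), pow_succ, Nat.add_sub_cancel]
    field_simp
  refine ⟨fun x => ?_, affineHomeomorph c (Y 0) hc, fun _ => rfl⟩
  simp only [f, T, g, hX]
  rw [add_mul_prod_affine_conj (by omega) hc, hk]
end

section
/- Let n ≥ 2, s ∈ {1, −1}, and let x₁, …, x_{n−1} be real numbers; set x₀ = 0 and define the canonical polynomial map g_n(x) = x + (−1)^{n−1}·sⁿ·x·∏_{i=1}^{n−1}(x − x_i). For each k ∈ {0, …, n−1}, the derivative at the fixed point x_k satisfies g_n′(x_k) = 1 + sⁿ·∏_{i≠k}(x_i − x_k), where the product runs over i ∈ {0, …, n−1} with i ≠ k. Consequently, defining the product distance D_{n,k} = sⁿ·∏_{i≠k}(x_i − x_k): if −2 < D_{n,k} < 0 then x_k is an asymptotically stable fixed point of g_n, whereas if D_{n,k} > 0 or D_{n,k} < −2 then x_k is unstable. -/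
/-!
With `x₀ = 0` the map is `g(x) = x + C · ∏_{i<n} (x - xᵢ)` where `C = (-1)^(n-1) sⁿ`, so each `x_k` is a
fixed point and `g'(x_k) = 1 + C · ∏_{i≠k} (x_k - xᵢ) = 1 + D_{n,k}`: reversing the `n - 1` factors
produces a second sign `(-1)^(n-1)` which cancels the first. The two conditions on `D_{n,k}` say exactly
that `|g'(x_k)| < 1`, resp. `|g'(x_k)| > 1`, and linearization then shows that near `x_k` the map
contracts, resp. expands, the distance to `x_k` by a constant factor.
-/

section FixedPoint

variable {g : ℝ → ℝ} {p : ℝ}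

lemma abs_iterate_sub_le_of_contracting {c δ : ℝ} (hc0 : 0 ≤ c) (hc1 : c ≤ 1)
    (h : ∀ x, |x - p| < δ → |g x - p| ≤ c * |x - p|) {x : ℝ} (hx : |x - p| < δ) (n : ℕ) :
    |g^[n] x - p| ≤ c ^ n * |x - p| := by
  induction n with
  | zero => simp
  | succ n ih =>
    have hn : c ^ n * |x - p| ≤ |x - p| :=
      mul_le_of_le_one_left (abs_nonneg _) (pow_le_one₀ hc0 hc1)
    rw [Function.iterate_succ_apply', pow_succ', mul_assoc]
    exact (h _ (ih.trans hn |>.trans_lt hx)).trans (mul_le_mul_of_nonneg_left ih hc0)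

lemma isAsymptoticallyStableFP_of_contracting {c δ : ℝ} (hc0 : 0 ≤ c) (hc1 : c < 1) (hδ : 0 < δ)
    (h : ∀ x, |x - p| < δ → |g x - p| ≤ c * |x - p|) : IsAsymptoticallyStableFP g p := by
  have hiter {x : ℝ} (hx : |x - p| < δ) (n : ℕ) :=
    abs_iterate_sub_le_of_contracting hc0 hc1.le h hx n
  refine ⟨fun ε hε => ⟨min δ ε, lt_min hδ hε, fun x hx n => ?_⟩, ⟨δ, hδ, fun x hx => ?_⟩⟩
  · calc |g^[n] x - p| ≤ c ^ n * |x - p| := hiter (hx.trans_le (min_le_left _ _)) n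
      _ ≤ |x - p| := mul_le_of_le_one_left (abs_nonneg _) (pow_le_one₀ hc0 hc1.le)
      _ < ε := hx.trans_le (min_le_right _ _)
  · rw [tendsto_iff_dist_tendsto_zero]
    have hlim : Filter.Tendsto (fun n : ℕ => c ^ n * |x - p|) Filter.atTop (nhds 0) := by
      simpa using (tendsto_pow_atTop_nhds_zero_of_lt_one hc0 hc1).mul_const |x - p|
    exact squeeze_zero (fun _ => dist_nonneg) (fun n => hiter hx n) hlim

lemma le_abs_iterate_sub_of_expanding {c δ : ℝ} (hc : 0 ≤ c)
    (h : ∀ x, |x - p| < δ → c * |x - p| ≤ |g x - p|) {x : ℝ} (hx : ∀ n, |g^[n] x - p| < δ)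
    (n : ℕ) : c ^ n * |x - p| ≤ |g^[n] x - p| := by
  induction n with
  | zero => simp
  | succ n ih =>
    rw [Function.iterate_succ_apply', pow_succ', mul_assoc]
    exact (mul_le_mul_of_nonneg_left ih hc).trans (h _ (hx n))

lemma not_isStableFP_of_expanding {c δ : ℝ} (hc : 1 < c) (hδ : 0 < δ)
    (h : ∀ x, |x - p| < δ → c * |x - p| ≤ |g x - p|) : ¬ IsStableFP g p := by
  intro hstab
  obtain ⟨δ', hδ', hbounded⟩ := hstab δ hδ
  set x := p + δ' / 2
  have hx : |x - p| = δ' / 2 := by rw [add_sub_cancel_left, abs_of_pos (half_pos hδ')]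
  have horbit : ∀ n, |g^[n] x - p| < δ := hbounded x (by rw [hx]; linarith)
  obtain ⟨N, hN⟩ := pow_unbounded_of_one_lt (δ / |x - p|) hc
  rw [div_lt_iff₀ (by rw [hx]; positivity)] at hN
  exact (hN.trans_le (le_abs_iterate_sub_of_expanding (by linarith) h horbit N)).not_gt (horbit N)

lemma HasDerivAt.exists_abs_sub_sub_mul_le {m ε : ℝ} (hg : HasDerivAt g m p) (hε : 0 < ε) :
    ∃ δ > 0, ∀ x, |x - p| < δ → |g x - g p - m * (x - p)| ≤ ε * |x - p| := by
  obtain ⟨δ, hδ, hball⟩ := Metric.eventually_nhds_iff.1 (hg.isLittleO.def hε)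
  refine ⟨δ, hδ, fun x hx => ?_⟩
  simpa [Real.norm_eq_abs, mul_comm m] using hball (show dist x p < δ by rwa [Real.dist_eq])

theorem HasDerivAt.isAsymptoticallyStableFP {m : ℝ} (hg : HasDerivAt g m p) (hgp : g p = p)
    (hm : |m| < 1) : IsAsymptoticallyStableFP g p := by
  obtain ⟨δ, hδ, happrox⟩ := hg.exists_abs_sub_sub_mul_le (ε := (1 - |m|) / 2) (by linarith)
  refine isAsymptoticallyStableFP_of_contracting (c := (1 + |m|) / 2) (by positivity)
    (by linarith) hδ fun x hx => ?_
  have happrox_x := happrox x hx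
  have htriangle := abs_sub_abs_le_abs_sub (g x - p) (m * (x - p))
  rw [hgp] at happrox_x
  rw [abs_mul] at htriangle
  linarith

theorem HasDerivAt.not_isStableFP {m : ℝ} (hg : HasDerivAt g m p) (hgp : g p = p)
    (hm : 1 < |m|) : ¬ IsStableFP g p := by
  obtain ⟨δ, hδ, happrox⟩ := hg.exists_abs_sub_sub_mul_le (ε := (|m| - 1) / 2) (by linarith)
  refine not_isStableFP_of_expanding (c := (1 + |m|) / 2) (by linarith) hδ fun x hx => ?_
  have happrox_x := happrox x hx
  have htriangle := abs_sub_abs_le_abs_sub (m * (x - p)) (g x - p)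
  rw [hgp] at happrox_x
  rw [abs_sub_comm (m * (x - p)), abs_mul] at htriangle
  linarith

end FixedPoint

lemma hasDerivAt_prod_sub_of_mem {𝕜 ι : Type*} [NontriviallyNormedField 𝕜] [DecidableEq ι]
    {s : Finset ι} (v : ι → 𝕜) {k : ι} (hk : k ∈ s) :
    HasDerivAt (fun x => ∏ i ∈ s, (x - v i)) (∏ i ∈ s.erase k, (v k - v i)) (v k) := by
  simpa only [Lagrange.eval_nodal, Lagrange.eval_nodal_derivative_eval_node_eq hk] using
    (Lagrange.nodal s v).hasDerivAt (v k)

theorem stmt_18_general (n : ℕ) (s : ℝ)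
    (X : ℕ → ℝ) (hX0 : X 0 = 0) (k : ℕ) (hk : k < n) :
    let g : ℝ → ℝ := fun x =>
      x + (-1) ^ (n - 1) * s ^ n * x * ∏ i ∈ Finset.Ico 1 n, (x - X i)
    let D : ℝ := s ^ n * ∏ i ∈ (Finset.range n).erase k, (X i - X k)
    deriv g (X k) = 1 + D ∧
    (-2 < D → D < 0 → IsAsymptoticallyStableFP g (X k)) ∧
    (0 < D ∨ D < -2 → ¬ IsStableFP g (X k)) := by
  intro g D
  have hkn : k ∈ Finset.range n := Finset.mem_range.2 hk
  have hg : g = fun x => x + (-1) ^ (n - 1) * s ^ n * ∏ i ∈ Finset.range n, (x - X i) := by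
    funext x
    simp only [g, Finset.prod_range_eq_mul_Ico _ (hk.trans_le' k.zero_le), hX0, sub_zero]
    ring
  have hfix : g (X k) = X k := by
    have hvanish : ∏ i ∈ Finset.range n, (X k - X i) = 0 := Finset.prod_eq_zero hkn (sub_self _)
    simp [hg, hvanish]
  have hsign : ∏ i ∈ (Finset.range n).erase k, (X k - X i)
      = (-1) ^ (n - 1) * ∏ i ∈ (Finset.range n).erase k, (X i - X k) := by
    have hcard : ((Finset.range n).erase k).card = n - 1 := by
      rw [Finset.card_erase_of_mem hkn, Finset.card_range]
    rw [← hcard, ← Finset.prod_neg]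
    simp only [neg_sub]
  have hderiv : HasDerivAt g (1 + D) (X k) := by
    rw [hg]
    refine ((hasDerivAt_id' (X k)).add ((hasDerivAt_prod_sub_of_mem X hkn).const_mul
      ((-1) ^ (n - 1) * s ^ n))).congr_deriv ?_
    rw [hsign, mul_mul_mul_comm, ← pow_add, ← two_mul, pow_mul, neg_one_sq, one_pow, one_mul]
  refine ⟨hderiv.deriv, fun hlo hhi => hderiv.isAsymptoticallyStableFP hfix ?_,
    fun hD => hderiv.not_isStableFP hfix ?_⟩
  · rw [abs_lt]; constructor <;> linarith
  · rcases hD with hD | hD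
    · rw [abs_of_pos (by linarith)]; linarith
    · rw [abs_of_neg (by linarith)]; linarith

/-- multiplier and stability of the fixed points of the
canonical polynomial map of degree `n` via the product distance function. -/
theorem stmt_18 (n : ℕ) (hn : 2 ≤ n) (s : ℝ) (hs : s = 1 ∨ s = -1)
    (X : ℕ → ℝ) (hX0 : X 0 = 0) (k : ℕ) (hk : k < n) :
    let g : ℝ → ℝ := fun x =>
      x + (-1) ^ (n - 1) * s ^ n * x * ∏ i ∈ Finset.Ico 1 n, (x - X i)
    let D : ℝ := s ^ n * ∏ i ∈ (Finset.range n).erase k, (X i - X k)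
    deriv g (X k) = 1 + D ∧
    (-2 < D → D < 0 → IsAsymptoticallyStableFP g (X k)) ∧
    (0 < D ∨ D < -2 → ¬ IsStableFP g (X k)) :=
  stmt_18_general n s X hX0 k hk
end
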